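/- arXiv:2202.13718 — 6 statements merged into one kernel-verified Lean document; each statement's English description precedes it below -/
import Mathlib

section
/- Let l be (M,m)-(restricted smooth, restricted strongly concave) on the sparse subdomain Ω_{2k}, with 0 < m ≤ M. Then for every pair of subsets S, T ⊆ [n] each of size at most k (with the maximizers β^(S) and β^(S∪{j}) for j ∈ T assumed to exist), it holds that 2M · Σ_{j∈T} f_S(j) ≥ ‖∇l(β^(S))_T‖₂² ≥ 2m · Σ_{j∈T} f_S(j). -/
open scoped BigOperators

noncomputable section

abbrev Euc (n : ℕ) := EuclideanSpace ℝ (Fin n)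

/-- Number of nonzero coordinates (the ℓ₀ "norm"). -/
def norm0 {n : ℕ} (x : Euc n) : ℕ := (Finset.univ.filter fun i => x i ≠ 0).card

/-- `l` is (M,m)-(restricted smooth, restricted strongly concave) on the sparse
subdomain `Ω_r`, with gradient `g`. -/
def IsRSCSM {n : ℕ} (l : Euc n → ℝ) (g : Euc n → Euc n) (M m : ℝ) (r : ℕ) : Prop :=
  ∀ x y : Euc n, norm0 x ≤ r → norm0 y ≤ r → norm0 (x - y) ≤ r →
    (l y - l x - (inner ℝ (g x) (y - x) : ℝ) ≤ -(m / 2) * ‖y - x‖ ^ 2) ∧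
    (-(M / 2) * ‖y - x‖ ^ 2 ≤ l y - l x - (inner ℝ (g x) (y - x) : ℝ))

/-- `x` is supported in the index set `S`. -/
def SuppIn {n : ℕ} (S : Finset (Fin n)) (x : Euc n) : Prop := ∀ i, i ∉ S → x i = 0

/-- The support selection function `f(S) = l(β^(S)) - l(0)`. -/
def fsel {n : ℕ} (l : Euc n → ℝ) (B : Finset (Fin n) → Euc n) (S : Finset (Fin n)) : ℝ :=
  l (B S) - l 0

/-!
Both bounds are comparisons along the single coordinate `j`. Since `β^(S)` maximizes `l` on the
vectors supported in `S`, the gradient there vanishes on `S`, so `∂_j l(β^(S))` is the only part of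
the gradient seen by a step inside `S ∪ {j}`. Restricted smoothness along the step
`(∂_j l / M) e_j` gives `f_S(j) ≥ (∂_j l)² / 2M`; restricted strong concavity between `β^(S)` and
`β^(S ∪ {j})`, with `t` the `j`-th coordinate of their difference, gives
`f_S(j) ≤ t ∂_j l - m t² / 2 ≤ (∂_j l)² / 2m`. Summing over `j ∈ T` gives the theorem.
-/

variable {n : ℕ}

namespace SuppIn

variable {S : Finset (Fin n)} {x y : Euc n}

lemma mono {U : Finset (Fin n)} (hx : SuppIn S x) (hSU : S ⊆ U) : SuppIn U x :=
  fun i hi => hx i fun hiS => hi (hSU hiS)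

lemma sub (hx : SuppIn S x) (hy : SuppIn S y) : SuppIn S (x - y) := fun i hi => by
  simp [hx i hi, hy i hi]

lemma add_smul_single (hx : SuppIn S x) (j : Fin n) (t : ℝ) :
    SuppIn (insert j S) (x + t • EuclideanSpace.single j 1) := fun i hi => by
  rw [Finset.mem_insert, not_or] at hi
  simp [hx i hi.2, hi.1]

lemma norm0_le_card (hx : SuppIn S x) : norm0 x ≤ S.card :=
  Finset.card_le_card fun i hi => by
    by_contra hiS
    exact (Finset.mem_filter.mp hi).2 (hx i hiS)

end SuppIn

lemma sq_apply_le_norm_sq (x : Euc n) (i : Fin n) : x i ^ 2 ≤ ‖x‖ ^ 2 := by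
  simpa [sq_abs] using pow_le_pow_left₀ (norm_nonneg _) (PiLp.norm_apply_le x i) 2

lemma inner_eq_mul_apply_of_forall_ne {u v : Euc n} {j : Fin n}
    (h : ∀ i ≠ j, u i = 0 ∨ v i = 0) : inner ℝ u v = u j * v j := by
  rw [PiLp.inner_apply, Finset.sum_eq_single j (fun i _ hij => ?_) (by simp)]
  · simp [mul_comm]
  · rcases h i hij with hu | hv <;> simp [*]

lemma HasGradientAt.apply_eq_zero_of_suppIn_max {l : Euc n → ℝ} {g x : Euc n}
    {S : Finset (Fin n)} {j : Fin n} (hgrad : HasGradientAt l g x) (hx : SuppIn S x)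
    (hmax : ∀ y, SuppIn S y → l y ≤ l x) (hj : j ∈ S) : g j = 0 := by
  set e : Euc n := EuclideanSpace.single j 1
  have hline : HasDerivAt (fun t : ℝ => x + t • e) e 0 := by
    simpa using ((hasDerivAt_id (0 : ℝ)).smul_const e).const_add x
  have hderiv : HasDerivAt (fun t : ℝ => l (x + t • e)) (g j) 0 := by
    have h := (show HasFDerivAt l (InnerProductSpace.toDual ℝ (Euc n) g) (x + (0 : ℝ) • e) by
      simpa using hgrad.hasFDerivAt).comp_hasDerivAt (0 : ℝ) hline
    rwa [InnerProductSpace.toDual_apply_apply, EuclideanSpace.inner_single_right, conj_trivial,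
      one_mul] at h
  have hlocmax : IsLocalMax (fun t : ℝ => l (x + t • e)) 0 :=
    Filter.Eventually.of_forall fun t => by
      simpa using hmax _ ((hx.add_smul_single j t).mono (by simp [Finset.insert_eq_of_mem hj]))
  exact hlocmax.hasDerivAt_eq_zero hderiv

namespace IsRSCSM

variable {l : Euc n → ℝ} {g : Euc n → Euc n} {M m : ℝ} {r : ℕ}

lemma bounds_of_suppIn (hl : IsRSCSM l g M m r) {U : Finset (Fin n)} (hU : U.card ≤ r)
    {x y : Euc n} (hx : SuppIn U x) (hy : SuppIn U y) :
    (l y - l x - inner ℝ (g x) (y - x) ≤ -(m / 2) * ‖y - x‖ ^ 2) ∧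
    (-(M / 2) * ‖y - x‖ ^ 2 ≤ l y - l x - inner ℝ (g x) (y - x)) :=
  hl x y (hx.norm0_le_card.trans hU) (hy.norm0_le_card.trans hU)
    ((hx.sub hy).norm0_le_card.trans hU)

lemma sq_le_two_mul_sub (hl : IsRSCSM l g M m r) (hM : 0 < M) {S : Finset (Fin n)}
    {j : Fin n} (hU : (insert j S).card ≤ r) {x x' : Euc n} (hx : SuppIn S x)
    (hmax : ∀ y, SuppIn (insert j S) y → l y ≤ l x') :
    g x j ^ 2 ≤ 2 * M * (l x' - l x) := by
  set γ := g x j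
  set y := x + (γ / M) • EuclideanSpace.single j (1 : ℝ)
  have hy : SuppIn (insert j S) y := hx.add_smul_single j _
  have hsmooth := (hl.bounds_of_suppIn hU (hx.mono (Finset.subset_insert j S)) hy).2
  have hyx : y - x = (γ / M) • EuclideanSpace.single j (1 : ℝ) := add_sub_cancel_left _ _
  rw [hyx, real_inner_smul_right, EuclideanSpace.inner_single_right, conj_trivial, one_mul,
    norm_smul, PiLp.norm_single, norm_one, mul_one, Real.norm_eq_abs, sq_abs] at hsmooth
  have hgain : γ ^ 2 / (2 * M) ≤ l x' - l x := by
    have : γ ^ 2 / (2 * M) = γ / M * γ - M / 2 * (γ / M) ^ 2 := by field_simp; ring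
    linarith [hmax y hy]
  rwa [div_le_iff₀ (by positivity), mul_comm] at hgain

lemma two_mul_sub_le_sq (hl : IsRSCSM l g M m r) (hm : 0 ≤ m) {S : Finset (Fin n)}
    {j : Fin n} (hU : (insert j S).card ≤ r) {x x' : Euc n} (hx : SuppIn S x)
    (hx' : SuppIn (insert j S) x') (hgS : ∀ i ∈ S, g x i = 0) :
    2 * m * (l x' - l x) ≤ g x j ^ 2 := by
  set t := (x' - x) j
  have hconc := (hl.bounds_of_suppIn hU (hx.mono (Finset.subset_insert j S)) hx').1
  have hinner : inner ℝ (g x) (x' - x) = g x j * t := by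
    refine inner_eq_mul_apply_of_forall_ne fun i hij => ?_
    by_cases hiS : i ∈ S
    · exact .inl (hgS i hiS)
    · exact .inr (hx'.sub (hx.mono (Finset.subset_insert j S)) i (by simp [hij, hiS]))
  have hgain : l x' - l x ≤ g x j * t - m / 2 * t ^ 2 := by
    nlinarith [sq_apply_le_norm_sq (x' - x) j]
  nlinarith [sq_nonneg (g x j - m * t)]

end IsRSCSM

theorem stmt0_general {n k : ℕ} (l : Euc n → ℝ) (g : Euc n → Euc n) (M m : ℝ)
    (hm : 0 < m) (hmM : m ≤ M)
    (hgrad : ∀ x, HasGradientAt l (g x) x)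
    (hl : IsRSCSM l g M m (2 * k))
    (B : Finset (Fin n) → Euc n)
    (hBsupp : ∀ S, SuppIn S (B S))
    (hBmax : ∀ S x, SuppIn S x → l x ≤ l (B S))
    (S T : Finset (Fin n)) (hS : S.card ≤ k) (hT : T.card ≤ k) :
    2 * M * (∑ j ∈ T, (fsel l B (insert j S) - fsel l B S)) ≥ ∑ j ∈ T, (g (B S) j) ^ 2 ∧
    ∑ j ∈ T, (g (B S) j) ^ 2 ≥ 2 * m * (∑ j ∈ T, (fsel l B (insert j S) - fsel l B S)) := by
  have hgS : ∀ i ∈ S, g (B S) i = 0 := fun i hi =>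
    (hgrad (B S)).apply_eq_zero_of_suppIn_max (hBsupp S) (hBmax S) hi
  have hcard : ∀ j ∈ T, (insert j S).card ≤ 2 * k := fun j hj => by
    have : 1 ≤ k := (Finset.one_le_card.mpr ⟨j, hj⟩).trans hT
    have := Finset.card_insert_le j S
    omega
  simp only [fsel, sub_sub_sub_cancel_right, ge_iff_le, Finset.mul_sum]
  exact ⟨Finset.sum_le_sum fun j hj => hl.sq_le_two_mul_sub (hm.trans_le hmM) (hcard j hj)
      (hBsupp S) (hBmax _),
    Finset.sum_le_sum fun j hj => hl.two_mul_sub_le_sq hm.le (hcard j hj) (hBsupp S)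
      (hBsupp _) hgS⟩

theorem stmt0 {n k : ℕ} (l : Euc n → ℝ) (g : Euc n → Euc n) (M m : ℝ)
    (hm : 0 < m) (hmM : m ≤ M)
    (hgrad : ∀ x, HasGradientAt l (g x) x)
    (hl : IsRSCSM l g M m (2 * k))
    (B : Finset (Fin n) → Euc n)
    (hB0 : B ∅ = 0)
    (hBsupp : ∀ S, SuppIn S (B S))
    (hBmax : ∀ S x, SuppIn S x → l x ≤ l (B S))
    (S T : Finset (Fin n)) (hS : S.card ≤ k) (hT : T.card ≤ k) :
    2 * M * (∑ j ∈ T, (fsel l B (insert j S) - fsel l B S)) ≥ ∑ j ∈ T, (g (B S) j) ^ 2 ∧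
    ∑ j ∈ T, (g (B S) j) ^ 2 ≥ 2 * m * (∑ j ∈ T, (fsel l B (insert j S) - fsel l B S)) :=
  stmt0_general l g M m hm hmM hgrad hl B hBsupp hBmax S T hS hT
end
end

section
/- Let l be (M,m)-(restricted smooth, restricted strongly concave) on the sparse subdomain Ω_{2k}, with 0 < m ≤ M. Then for every pair of subsets S, T ⊆ [n] each of size at most k (with the relevant maximizers β^(S), β^(S∪{j}) and β^(S∪T) assumed to exist), it holds that (M/m) · f_S(T) ≥ Σ_{j∈T} f_S(j) ≥ (m/M) · f_S(T). -/
open scoped BigOperators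

noncomputable section

/-!
Write `∇ = ∇l(β^(S))` and `∇_T` for its restriction to the coordinates in `T`. Since `β^(S)`
maximises `l` on vectors supported in `S`, `∇` vanishes on `S`. For `|S ∪ T| ≤ 2k`, restricted
smoothness applied to the step `β^(S) + ∇_T / M` and restricted strong concavity applied to
`β^(S ∪ T)` (after completing the square) give
`‖∇_T‖² / (2M) ≤ f_S(T) ≤ ‖∇_T‖² / (2m)`.
Taking `T = {j}` and summing over `j ∈ T`, the same sandwich holds for `∑_{j ∈ T} f_S(j)`, since
`‖∇_T‖² = ∑_{j ∈ T} ∇_j²`; comparing the two sandwiches gives both inequalities.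
-/

def coordRestrict {n : ℕ} (T : Finset (Fin n)) (v : Euc n) : Euc n :=
  WithLp.toLp 2 fun i => if i ∈ T then v i else 0

section CoordRestrict

variable {n : ℕ}

@[simp]
lemma coordRestrict_apply (T : Finset (Fin n)) (v : Euc n) (i : Fin n) :
    coordRestrict T v i = if i ∈ T then v i else 0 :=
  rfl

lemma suppIn_coordRestrict (T : Finset (Fin n)) (v : Euc n) : SuppIn T (coordRestrict T v) :=
  fun i hi => by simp [hi]

lemma sq_norm_coordRestrict (T : Finset (Fin n)) (v : Euc n) :
    ‖coordRestrict T v‖ ^ 2 = ∑ i ∈ T, v i ^ 2 := by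
  simp [EuclideanSpace.norm_sq_eq, Finset.sum_ite_mem]

lemma inner_coordRestrict_self (T : Finset (Fin n)) (v : Euc n) :
    inner ℝ v (coordRestrict T v) = ‖coordRestrict T v‖ ^ 2 := by
  rw [sq_norm_coordRestrict, PiLp.inner_apply]
  simp [Finset.sum_ite_mem, sq, mul_comm]

lemma sum_sq_norm_coordRestrict_singleton (T : Finset (Fin n)) (v : Euc n) :
    ∑ j ∈ T, ‖coordRestrict {j} v‖ ^ 2 = ‖coordRestrict T v‖ ^ 2 := by
  simp [sq_norm_coordRestrict]

lemma inner_eq_inner_coordRestrict {U T : Finset (Fin n)} {v d : Euc n} (hd : SuppIn U d)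
    (hv : ∀ i ∈ U, i ∉ T → v i = 0) : inner ℝ v d = inner ℝ (coordRestrict T v) d := by
  simp only [PiLp.inner_apply, RCLike.inner_apply, conj_trivial]
  refine Finset.sum_congr rfl fun i _ => ?_
  by_cases hiT : i ∈ T
  · simp [hiT]
  · by_cases hiU : i ∈ U
    · simp [hiT, hv i hiU hiT]
    · simp [hd i hiU]

end CoordRestrict

section Support

variable {n : ℕ} {S : Finset (Fin n)} {x y : Euc n}

lemma SuppIn.mono_s2 {U : Finset (Fin n)} (hx : SuppIn S x) (hSU : S ⊆ U) : SuppIn U x :=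
  fun i hi => hx i fun h => hi (hSU h)

lemma SuppIn.add (hx : SuppIn S x) (hy : SuppIn S y) : SuppIn S (x + y) :=
  fun i hi => by simp [hx i hi, hy i hi]

lemma SuppIn.smul (hx : SuppIn S x) (c : ℝ) : SuppIn S (c • x) :=
  fun i hi => by simp [hx i hi]

lemma SuppIn.sub_s2 (hx : SuppIn S x) (hy : SuppIn S y) : SuppIn S (x - y) :=
  fun i hi => by simp [hx i hi, hy i hi]

lemma norm0_le_card (hx : SuppIn S x) : norm0 x ≤ S.card :=
  Finset.card_le_card fun i hi => by
    by_contra hiS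
    exact (Finset.mem_filter.mp hi).2 (hx i hiS)

end Support

/-- Completing the square in `0 ≤ ‖a - m • d‖²`. -/
lemma two_mul_inner_sub_sq_norm_le {E : Type*} [NormedAddCommGroup E] [InnerProductSpace ℝ E]
    {m : ℝ} (a d : E) :
    2 * m * (inner ℝ a d - m / 2 * ‖d‖ ^ 2) ≤ ‖a‖ ^ 2 := by
  have h := norm_sub_sq_real a (m • d)
  rw [real_inner_smul_right, norm_smul, mul_pow, Real.norm_eq_abs, sq_abs] at h
  nlinarith [sq_nonneg ‖a - m • d‖]

section SupportSelection

variable {n : ℕ} {l : Euc n → ℝ} {g : Euc n → Euc n} {M m : ℝ} {r : ℕ}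
  {B : Finset (Fin n) → Euc n}

lemma IsRSCSM.of_suppIn (hl : IsRSCSM l g M m r) {U : Finset (Fin n)} (hU : U.card ≤ r)
    {x y : Euc n} (hx : SuppIn U x) (hy : SuppIn U y) :
    (l y - l x - inner ℝ (g x) (y - x) ≤ -(m / 2) * ‖y - x‖ ^ 2) ∧
    (-(M / 2) * ‖y - x‖ ^ 2 ≤ l y - l x - inner ℝ (g x) (y - x)) :=
  hl x y ((norm0_le_card hx).trans hU) ((norm0_le_card hy).trans hU)
    ((norm0_le_card (hx.sub_s2 hy)).trans hU)

lemma sq_norm_coordRestrict_grad_le (hl : IsRSCSM l g M m r) (hM : 0 < M)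
    (hBsupp : ∀ S, SuppIn S (B S)) (hBmax : ∀ S x, SuppIn S x → l x ≤ l (B S))
    {S T : Finset (Fin n)} (hST : (S ∪ T).card ≤ r) :
    ‖coordRestrict T (g (B S))‖ ^ 2 ≤ 2 * M * (l (B (S ∪ T)) - l (B S)) := by
  set v := coordRestrict T (g (B S))
  set y := B S + M⁻¹ • v
  have hBS : SuppIn (S ∪ T) (B S) := (hBsupp S).mono_s2 Finset.subset_union_left
  have hy : SuppIn (S ∪ T) y :=
    hBS.add (((suppIn_coordRestrict T _).mono_s2 Finset.subset_union_right).smul M⁻¹)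
  have hsmooth := (hl.of_suppIn hST hBS hy).2
  have hmax := hBmax (S ∪ T) y hy
  rw [add_sub_cancel_left, real_inner_smul_right, inner_coordRestrict_self, norm_smul, mul_pow,
    Real.norm_eq_abs, sq_abs] at hsmooth
  have hgain : ‖v‖ ^ 2 = 2 * M * (M⁻¹ * ‖v‖ ^ 2 - M / 2 * (M⁻¹ ^ 2 * ‖v‖ ^ 2)) := by
    field_simp
    ring
  nlinarith

lemma grad_eq_zero_of_mem (hl : IsRSCSM l g M m r) (hM : 0 < M)
    (hBsupp : ∀ S, SuppIn S (B S)) (hBmax : ∀ S x, SuppIn S x → l x ≤ l (B S))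
    {S : Finset (Fin n)} (hS : S.card ≤ r) {i : Fin n} (hi : i ∈ S) : g (B S) i = 0 := by
  have h := sq_norm_coordRestrict_grad_le hl hM hBsupp hBmax (S := S) (T := S)
    (by rwa [Finset.union_self])
  rw [Finset.union_self, sub_self, mul_zero, sq_norm_coordRestrict] at h
  have hsum := (Finset.sum_eq_zero_iff_of_nonneg fun j _ => sq_nonneg (g (B S) j)).mp
    (le_antisymm h (Finset.sum_nonneg fun j _ => sq_nonneg _)) i hi
  exact pow_eq_zero_iff two_ne_zero |>.mp hsum

lemma le_sq_norm_coordRestrict_grad (hl : IsRSCSM l g M m r) (hm : 0 < m)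
    (hBsupp : ∀ S, SuppIn S (B S)) {S T : Finset (Fin n)} (hST : (S ∪ T).card ≤ r)
    (hgrad : ∀ i ∈ S, g (B S) i = 0) :
    2 * m * (l (B (S ∪ T)) - l (B S)) ≤ ‖coordRestrict T (g (B S))‖ ^ 2 := by
  have hBS : SuppIn (S ∪ T) (B S) := (hBsupp S).mono_s2 Finset.subset_union_left
  have hconcave := (hl.of_suppIn hST hBS (hBsupp (S ∪ T))).1
  have hd := (hBsupp (S ∪ T)).sub_s2 hBS
  rw [inner_eq_inner_coordRestrict hd fun i hi hiT => hgrad i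
    ((Finset.mem_union.mp hi).resolve_right hiT)] at hconcave
  have hsq := two_mul_inner_sub_sq_norm_le (m := m) (coordRestrict T (g (B S))) (B (S ∪ T) - B S)
  nlinarith

end SupportSelection

theorem stmt2_general {n k : ℕ} (l : Euc n → ℝ) (g : Euc n → Euc n) (M m : ℝ)
    (hm : 0 < m) (hmM : m ≤ M)
    (hl : IsRSCSM l g M m (2 * k))
    (B : Finset (Fin n) → Euc n)
    (hBsupp : ∀ S, SuppIn S (B S))
    (hBmax : ∀ S x, SuppIn S x → l x ≤ l (B S))
    (S T : Finset (Fin n)) (hS : S.card ≤ k) (hT : T.card ≤ k) :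
    (M / m) * (fsel l B (S ∪ T) - fsel l B S)
        ≥ ∑ j ∈ T, (fsel l B (insert j S) - fsel l B S) ∧
    ∑ j ∈ T, (fsel l B (insert j S) - fsel l B S)
        ≥ (m / M) * (fsel l B (S ∪ T) - fsel l B S) := by
  have hM : 0 < M := hm.trans_le hmM
  have hgrad : ∀ i ∈ S, g (B S) i = 0 := fun i hi =>
    grad_eq_zero_of_mem hl hM hBsupp hBmax (hS.trans (by omega)) hi
  have hcard : ∀ U, U.card ≤ k → (S ∪ U).card ≤ 2 * k := fun U hU =>
    (Finset.card_union_le S U).trans (by omega)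
  have hsingle : ∀ j ∈ T, ({j} : Finset (Fin n)).card ≤ k := fun j hj => by
    rw [Finset.card_singleton]
    exact (Finset.card_pos.mpr ⟨j, hj⟩).trans_le hT
  have hfsel : ∀ U, fsel l B U - fsel l B S = l (B U) - l (B S) := fun U =>
    sub_sub_sub_cancel_right _ _ _
  simp only [hfsel, Finset.insert_eq, Finset.union_comm _ S, ge_iff_le]
  have hlo := Finset.sum_le_sum fun j hj => sq_norm_coordRestrict_grad_le hl hM hBsupp hBmax
    (hcard {j} (hsingle j hj))
  have hhi := Finset.sum_le_sum fun j hj => le_sq_norm_coordRestrict_grad hl hm hBsupp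
    (hcard {j} (hsingle j hj)) hgrad
  have hloT := sq_norm_coordRestrict_grad_le hl hM hBsupp hBmax (hcard T hT)
  have hhiT := le_sq_norm_coordRestrict_grad hl hm hBsupp (hcard T hT) hgrad
  rw [sum_sq_norm_coordRestrict_singleton, ← Finset.mul_sum] at hlo hhi
  constructor
  · rw [div_mul_eq_mul_div, le_div_iff₀ hm]
    linarith
  · rw [div_mul_eq_mul_div, div_le_iff₀ hM]
    linarith

theorem stmt2 {n k : ℕ} (l : Euc n → ℝ) (g : Euc n → Euc n) (M m : ℝ)
    (hm : 0 < m) (hmM : m ≤ M)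
    (hgrad : ∀ x, HasGradientAt l (g x) x)
    (hl : IsRSCSM l g M m (2 * k))
    (B : Finset (Fin n) → Euc n)
    (hB0 : B ∅ = 0)
    (hBsupp : ∀ S, SuppIn S (B S))
    (hBmax : ∀ S x, SuppIn S x → l x ≤ l (B S))
    (S T : Finset (Fin n)) (hS : S.card ≤ k) (hT : T.card ≤ k) :
    (M / m) * (fsel l B (S ∪ T) - fsel l B S)
        ≥ ∑ j ∈ T, (fsel l B (insert j S) - fsel l B S) ∧
    ∑ j ∈ T, (fsel l B (insert j S) - fsel l B S)
        ≥ (m / M) * (fsel l B (S ∪ T) - fsel l B S) :=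
  stmt2_general l g M m hm hmM hl B hBsupp hBmax S T hS hT
end
end

section
/- Let X ∈ ℝ^{k×n} have rows x_1ᵀ,…,x_kᵀ, let y ∈ {0,1}^k, and define the logistic log-likelihood l(β) := Σ_{i=1}^k [ y_i·⟨x_i, β⟩ − log(1 + exp(⟨x_i, β⟩)) ]. For S ⊆ [n] let X_S denote the submatrix of X consisting of the columns indexed by S. Then l is concave, and l is restricted smooth on the sparse subdomain Ω_r with parameter M := (1/4)·max_{S ⊆ [n], |S| ≤ r} λ_max(X_Sᵀ X_S): for all (x,y') ∈ Ω_r, 0 ≥ l(y') − l(x) − ⟨∇l(x), y'−x⟩ ≥ −(M/2)‖y'−x‖₂². -/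
open scoped BigOperators Matrix

noncomputable section

/-- The submatrix of `X` consisting of the columns indexed by `S`. -/
def colsOn {d n : ℕ} (X : Matrix (Fin d) (Fin n) ℝ) (S : Finset (Fin n)) :
    Matrix (Fin d) {i // i ∈ S} ℝ :=
  X.submatrix id (fun j : {i // i ∈ S} => (j : Fin n))

/-- The Gram matrix `X_Sᵀ X_S`. -/
def gramOn {d n : ℕ} (X : Matrix (Fin d) (Fin n) ℝ) (S : Finset (Fin n)) :
    Matrix {i // i ∈ S} {i // i ∈ S} ℝ :=
  (colsOn X S)ᵀ * colsOn X S

/-!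
Write `l β = ∑ᵢ (yᵢ ⟪xᵢ, β⟫ - φ ⟪xᵢ, β⟫)` with the softplus `φ t = log (1 + exp t)`, whose
derivative is the sigmoid `σ` and whose second derivative `σ (1 - σ)` lies in `[0, 1/4]`.
The gap `l z - l x - ⟪∇l x, z - x⟫` is then `-∑ᵢ (φ (aᵢ + bᵢ) - φ aᵢ - σ aᵢ bᵢ)` with
`aᵢ = ⟪xᵢ, x⟫` and `bᵢ = ⟪xᵢ, z - x⟫`, and each summand lies in `[0, bᵢ² / 8]` because both `φ`
and `t² / 8 - φ` are convex. Finally `∑ᵢ bᵢ² = ‖X (z - x)‖² = wᵀ X_Sᵀ X_S w`, where `S` is the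
support of `z - x` and `w` its restriction to `S`; when `|S| ≤ r` this is at most
`λ_max (X_Sᵀ X_S) ‖z - x‖²`, since an upper bound on the spectrum of a symmetric matrix bounds its
quadratic form.
-/

open Real Set Matrix
open scoped InnerProductSpace

def softplus (t : ℝ) : ℝ := log (1 + exp t)

theorem hasDerivAt_softplus (t : ℝ) : HasDerivAt softplus (sigmoid t) t := by
  convert ((hasDerivAt_exp t).const_add 1).log (by positivity) using 1
  · rfl
  · rw [sigmoid_def, exp_neg]
    field_simp
    ring

theorem deriv_softplus : deriv softplus = sigmoid :=
  funext fun t => (hasDerivAt_softplus t).deriv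

theorem differentiable_softplus : Differentiable ℝ softplus :=
  fun t => (hasDerivAt_softplus t).differentiableAt

theorem sigmoid_mul_one_sub_sigmoid_le (t : ℝ) : sigmoid t * (1 - sigmoid t) ≤ 1 / 4 := by
  nlinarith [sq_nonneg (sigmoid t - 1 / 2)]

theorem convexOn_softplus : ConvexOn ℝ univ softplus :=
  Monotone.convexOn_univ_of_deriv differentiable_softplus (deriv_softplus ▸ sigmoid_monotone)

theorem hasDerivAt_sq_div_eight_sub_softplus (t : ℝ) :
    HasDerivAt (fun t => t ^ 2 / 8 - softplus t) (t / 4 - sigmoid t) t := by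
  refine (((hasDerivAt_pow 2 t).div_const 8).fun_sub (hasDerivAt_softplus t)).congr_deriv ?_
  norm_num
  ring

theorem convexOn_sq_div_eight_sub_softplus :
    ConvexOn ℝ univ fun t => t ^ 2 / 8 - softplus t := by
  have hderiv (t : ℝ) : HasDerivAt (fun t => t / 4 - sigmoid t)
      (1 / 4 - sigmoid t * (1 - sigmoid t)) t :=
    ((hasDerivAt_id t).div_const 4).sub (hasDerivAt_sigmoid t)
  refine Monotone.convexOn_univ_of_deriv
    (fun t => (hasDerivAt_sq_div_eight_sub_softplus t).differentiableAt) ?_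
  rw [funext fun t => (hasDerivAt_sq_div_eight_sub_softplus t).deriv]
  refine monotone_of_deriv_nonneg (fun t => (hderiv t).differentiableAt) fun t => ?_
  rw [(hderiv t).deriv]
  linarith [sigmoid_mul_one_sub_sigmoid_le t]

theorem ConvexOn.add_mul_sub_le_of_hasDerivAt {s : Set ℝ} {f : ℝ → ℝ} {f' x y : ℝ}
    (hf : ConvexOn ℝ s f) (hx : x ∈ s) (hy : y ∈ s) (hfx : HasDerivAt f f' x) :
    f x + f' * (y - x) ≤ f y := by
  rcases lt_trichotomy x y with hxy | rfl | hxy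
  · have := hf.le_slope_of_hasDerivAt hx hy hxy hfx
    rw [slope_def_field, le_div_iff₀ (sub_pos.2 hxy)] at this
    linarith
  · simp
  · have := hf.slope_le_of_hasDerivAt hy hx hxy hfx
    rw [slope_def_field, div_le_iff₀ (sub_pos.2 hxy)] at this
    linarith

theorem softplus_add_sigmoid_mul_le (a b : ℝ) :
    softplus a + sigmoid a * b ≤ softplus (a + b) := by
  simpa using convexOn_softplus.add_mul_sub_le_of_hasDerivAt (mem_univ a) (mem_univ (a + b))
    (hasDerivAt_softplus a)

theorem softplus_add_le (a b : ℝ) :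
    softplus (a + b) ≤ softplus a + sigmoid a * b + b ^ 2 / 8 := by
  have := convexOn_sq_div_eight_sub_softplus.add_mul_sub_le_of_hasDerivAt (mem_univ a)
    (mem_univ (a + b)) (hasDerivAt_sq_div_eight_sub_softplus a)
  simp only [add_sub_cancel_left] at this
  nlinarith

theorem ConcaveOn.fun_sum {𝕜 E β ι : Type*} [Semiring 𝕜] [PartialOrder 𝕜] [AddCommMonoid E]
    [AddCommMonoid β] [PartialOrder β] [IsOrderedAddMonoid β] [SMul 𝕜 E] [Module 𝕜 β] {s : Set E}
    {t : Finset ι} {f : ι → E → β} (hs : Convex 𝕜 s) (hf : ∀ i ∈ t, ConcaveOn 𝕜 s (f i)) :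
    ConcaveOn 𝕜 s fun x => ∑ i ∈ t, f i x := by
  classical
  induction t using Finset.induction_on with
  | empty => simpa using concaveOn_const 0 hs
  | insert i t hi ih =>
    simp_rw [Finset.sum_insert hi]
    exact (hf i (t.mem_insert_self i)).add (ih fun j hj => hf j (Finset.mem_insert_of_mem hj))

section LogisticLogLikelihood

variable {ι E : Type*} [Fintype ι] [NormedAddCommGroup E] [InnerProductSpace ℝ E]

def logisticLogLik (a : ι → E) (y : ι → ℝ) (β : E) : ℝ :=
  ∑ i, (y i * ⟪a i, β⟫_ℝ - softplus ⟪a i, β⟫_ℝ)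

variable (a : ι → E) (y : ι → ℝ)

theorem concaveOn_logisticLogLik : ConcaveOn ℝ univ (logisticLogLik a y) := by
  refine ConcaveOn.fun_sum convex_univ fun i _ => ?_
  have hconc : ConcaveOn ℝ univ fun t => y i * t - softplus t :=
    (LinearMap.mulLeft ℝ (y i)).concaveOn convex_univ |>.sub convexOn_softplus
  exact hconc.comp_linearMap (innerₗ E (a i))

theorem hasFDerivAt_logisticLogLik (β : E) :
    HasFDerivAt (logisticLogLik a y) (∑ i, (y i - sigmoid ⟪a i, β⟫_ℝ) • innerSL ℝ (a i)) β := by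
  refine HasFDerivAt.fun_sum fun i _ => ?_
  have hinner := (innerSL ℝ (a i)).hasFDerivAt (x := β)
  rw [sub_smul]
  exact (hinner.const_mul (y i)).sub ((hasDerivAt_softplus _).comp_hasFDerivAt β hinner)

variable [CompleteSpace E]

theorem inner_gradient_logisticLogLik (β v : E) :
    ⟪gradient (logisticLogLik a y) β, v⟫_ℝ = ∑ i, (y i - sigmoid ⟪a i, β⟫_ℝ) * ⟪a i, v⟫_ℝ := by
  rw [gradient, InnerProductSpace.toDual_symm_apply, (hasFDerivAt_logisticLogLik a y β).fderiv]
  simp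

theorem logisticLogLik_sub_sub_inner_gradient (x z : E) :
    logisticLogLik a y z - logisticLogLik a y x - ⟪gradient (logisticLogLik a y) x, z - x⟫_ℝ =
      -∑ i, (softplus ⟪a i, z⟫_ℝ - softplus ⟪a i, x⟫_ℝ -
        sigmoid ⟪a i, x⟫_ℝ * ⟪a i, z - x⟫_ℝ) := by
  rw [inner_gradient_logisticLogLik, logisticLogLik, logisticLogLik, ← Finset.sum_sub_distrib,
    ← Finset.sum_sub_distrib, ← Finset.sum_neg_distrib]
  refine Finset.sum_congr rfl fun i _ => ?_
  rw [inner_sub_right]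
  ring

theorem logisticLogLik_sub_sub_inner_gradient_nonpos (x z : E) :
    logisticLogLik a y z - logisticLogLik a y x -
      ⟪gradient (logisticLogLik a y) x, z - x⟫_ℝ ≤ 0 := by
  rw [logisticLogLik_sub_sub_inner_gradient, neg_nonpos]
  refine Finset.sum_nonneg fun i _ => ?_
  have := softplus_add_sigmoid_mul_le ⟪a i, x⟫_ℝ ⟪a i, z - x⟫_ℝ
  rw [← inner_add_right, add_sub_cancel] at this
  linarith

theorem neg_sum_inner_sq_div_eight_le_logisticLogLik_sub_sub_inner_gradient (x z : E) :
    -(∑ i, ⟪a i, z - x⟫_ℝ ^ 2) / 8 ≤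
      logisticLogLik a y z - logisticLogLik a y x - ⟪gradient (logisticLogLik a y) x, z - x⟫_ℝ := by
  rw [logisticLogLik_sub_sub_inner_gradient, neg_div, neg_le_neg_iff, Finset.sum_div]
  refine Finset.sum_le_sum fun i _ => ?_
  have := softplus_add_le ⟪a i, x⟫_ℝ ⟪a i, z - x⟫_ℝ
  rw [← inner_add_right, add_sub_cancel] at this
  linarith

end LogisticLogLikelihood

open scoped MatrixOrder in
theorem Matrix.IsHermitian.dotProduct_mulVec_le {m : Type*} [Fintype m] [DecidableEq m]
    {G : Matrix m m ℝ} (hG : G.IsHermitian) {c : ℝ} (hc : ∀ μ ∈ spectrum ℝ G, μ ≤ c)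
    (w : m → ℝ) : w ⬝ᵥ G *ᵥ w ≤ c * (w ⬝ᵥ w) := by
  -- By the continuous functional calculus, `spectrum ℝ G ≤ c` makes `c • 1 - G` positive
  -- semidefinite.
  have hpsd := (Matrix.le_iff.1 (le_algebraMap_of_spectrum_le hc hG.isSelfAdjoint))
    |>.dotProduct_mulVec_nonneg w
  rw [Algebra.algebraMap_eq_smul_one, sub_mulVec, smul_mulVec, one_mulVec, dotProduct_sub,
    dotProduct_smul, smul_eq_mul] at hpsd
  simpa [sub_nonneg] using hpsd

theorem Finset.sum_coe_sort_eq_sum_of_eq_zero {α M : Type*} [Fintype α] [AddCommMonoid M]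
    {S : Finset α} {f : α → M} (hf : ∀ j ∉ S, f j = 0) : ∑ j : S, f j = ∑ j, f j := by
  rw [Finset.sum_coe_sort]
  exact Finset.sum_subset (Finset.subset_univ S) fun j _ hj => hf j hj

theorem mulVec_colsOn {d n : ℕ} (X : Matrix (Fin d) (Fin n) ℝ) {S : Finset (Fin n)}
    {v : Fin n → ℝ} (hv : ∀ j ∉ S, v j = 0) : colsOn X S *ᵥ (fun j : S => v j) = X *ᵥ v := by
  ext i
  exact Finset.sum_coe_sort_eq_sum_of_eq_zero (f := fun j => X i j * v j) fun j hj => by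
    simp [hv j hj]

theorem dotProduct_self_subtype {α R : Type*} [Fintype α] [NonUnitalNonAssocSemiring R]
    {S : Finset α} {v : α → R} (hv : ∀ j ∉ S, v j = 0) :
    (fun j : S => v j) ⬝ᵥ (fun j : S => v j) = v ⬝ᵥ v :=
  Finset.sum_coe_sort_eq_sum_of_eq_zero (f := fun j => v j * v j) fun j hj => by simp [hv j hj]

theorem mulVec_dotProduct_mulVec_le {d n : ℕ} (X : Matrix (Fin d) (Fin n) ℝ) {S : Finset (Fin n)}
    {v : Fin n → ℝ} (hv : ∀ j ∉ S, v j = 0) {c : ℝ} (hc : ∀ μ ∈ spectrum ℝ (gramOn X S), μ ≤ c) :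
    X *ᵥ v ⬝ᵥ X *ᵥ v ≤ c * (v ⬝ᵥ v) := by
  have hG : (gramOn X S).IsHermitian := by
    simpa [gramOn, conjTranspose_eq_transpose_of_trivial] using
      isHermitian_conjTranspose_mul_self (colsOn X S)
  have := hG.dotProduct_mulVec_le hc fun j : S => v j
  rwa [gramOn, ← mulVec_mulVec, dotProduct_mulVec, vecMul_transpose, mulVec_colsOn X hv,
    dotProduct_self_subtype hv] at this

theorem bddAbove_sparse_spectrum_gramOn {d n : ℕ} (X : Matrix (Fin d) (Fin n) ℝ) (r : ℕ) :
    BddAbove {μ : ℝ | ∃ S : Finset (Fin n), S.card ≤ r ∧ μ ∈ spectrum ℝ (gramOn X S)} := by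
  refine (Set.finite_iUnion fun S => Matrix.finite_spectrum (gramOn X S)).subset ?_ |>.bddAbove
  rintro μ ⟨S, -, hμ⟩
  exact Set.mem_iUnion.2 ⟨S, hμ⟩

theorem stmt8_general {k n r : ℕ}
    (X : Matrix (Fin k) (Fin n) ℝ) (y : Fin k → ℝ)
    (l : Euc n → ℝ)
    (hl : ∀ β : Euc n,
      l β = ∑ i, (y i * (∑ j, X i j * β j) - Real.log (1 + Real.exp (∑ j, X i j * β j))))
    (M : ℝ)
    (hM : M = (1 / 4) *
      sSup {μ : ℝ | ∃ S : Finset (Fin n), S.card ≤ r ∧ μ ∈ spectrum ℝ (gramOn X S)}) :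
    ConcaveOn ℝ Set.univ l ∧
    ∀ x y' : Euc n, norm0 x ≤ r → norm0 y' ≤ r → norm0 (x - y') ≤ r →
      (l y' - l x - (inner ℝ (gradient l x) (y' - x) : ℝ) ≤ 0) ∧
      (-(M / 2) * ‖y' - x‖ ^ 2 ≤ l y' - l x - (inner ℝ (gradient l x) (y' - x) : ℝ)) := by
  set c := sSup {μ : ℝ | ∃ S : Finset (Fin n), S.card ≤ r ∧ μ ∈ spectrum ℝ (gramOn X S)}
  set rows : Fin k → Euc n := fun i => WithLp.toLp 2 (X i)
  have hrows (i : Fin k) (β : Euc n) : ⟪rows i, β⟫_ℝ = (X *ᵥ β) i := by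
    simp [rows, PiLp.inner_apply, mulVec, dotProduct, mul_comm]
  obtain rfl : l = logisticLogLik rows y :=
    funext fun β => by simp [hl, logisticLogLik, hrows, softplus, mulVec, dotProduct]
  refine ⟨concaveOn_logisticLogLik rows y, fun x z _ _ hxz =>
    ⟨logisticLogLik_sub_sub_inner_gradient_nonpos rows y x z, ?_⟩⟩
  set v := z - x
  have hv : ∀ j ∉ Finset.univ.filter fun j => (x - z) j ≠ 0, v j = 0 := by
    intro j hj
    have : x j = z j := by simpa [sub_eq_zero] using hj
    simp [v, this]
  have hquad := mulVec_dotProduct_mulVec_le X hv fun μ hμ =>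
    le_csSup (bddAbove_sparse_spectrum_gramOn X r) ⟨_, hxz, hμ⟩
  have hnorm : ‖v‖ ^ 2 = v ⬝ᵥ v := by
    rw [EuclideanSpace.norm_sq_eq]
    simp [dotProduct, sq]
  have hsum : ∑ i, ⟪rows i, v⟫_ℝ ^ 2 = X *ᵥ v ⬝ᵥ X *ᵥ v := by
    simp [hrows, dotProduct, sq]
  calc -(M / 2) * ‖v‖ ^ 2 = -(c * (v ⬝ᵥ v)) / 8 := by rw [hM, hnorm]; ring
    _ ≤ -(∑ i, ⟪rows i, v⟫_ℝ ^ 2) / 8 := by rw [hsum]; linarith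
    _ ≤ _ := neg_sum_inner_sq_div_eight_le_logisticLogLik_sub_sub_inner_gradient rows y x z

theorem stmt8 {k n r : ℕ}
    (X : Matrix (Fin k) (Fin n) ℝ) (y : Fin k → ℝ)
    (hy : ∀ i, y i = 0 ∨ y i = 1)
    (l : Euc n → ℝ)
    (hl : ∀ β : Euc n,
      l β = ∑ i, (y i * (∑ j, X i j * β j) - Real.log (1 + Real.exp (∑ j, X i j * β j))))
    (M : ℝ)
    (hM : M = (1 / 4) *
      sSup {μ : ℝ | ∃ S : Finset (Fin n), S.card ≤ r ∧ μ ∈ spectrum ℝ (gramOn X S)}) :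
    ConcaveOn ℝ Set.univ l ∧
    ∀ x y' : Euc n, norm0 x ≤ r → norm0 y' ≤ r → norm0 (x - y') ≤ r →
      (l y' - l x - (inner ℝ (gradient l x) (y' - x) : ℝ) ≤ 0) ∧
      (-(M / 2) * ‖y' - x‖ ^ 2 ≤ l y' - l x - (inner ℝ (gradient l x) (y' - x) : ℝ)) :=
  stmt8_general X y l hl M hM
end
end

section
/- Fix real numbers 0 < z < 1 and 0 < δ < 1. In ℝ³ let y = (1,0,0)ᵀ, x₁ = (0,1,0)ᵀ, x₂ = (z, √(1−z²), 0)ᵀ, and x₃ = (δz, 0, √(1−δ²z²))ᵀ. For S ⊆ {1,2,3}, let X_S be the matrix whose columns are the vectors x_i for i ∈ S, and whenever X_SᵀX_S is invertible define f(S) := yᵀ X_S (X_Sᵀ X_S)^{−1} X_Sᵀ y. Then the Gram matrices for S = {1}, {2}, {3}, {1,2}, {1,3} are invertible and f({1}) = 0, f({2}) = z², f({3}) = δ²z², f({1,2}) = 1, and f({1,3}) = δ²z². -/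
open scoped BigOperators Matrix

noncomputable section

/-- The three-feature matrix of the motivating example: columns `x₁, x₂, x₃`. -/
def exX (z δ : ℝ) : Matrix (Fin 3) (Fin 3) ℝ :=
  !![0, z, δ * z;
     1, Real.sqrt (1 - z ^ 2), 0;
     0, 0, Real.sqrt (1 - δ ^ 2 * z ^ 2)]

/-- `f(S) = yᵀ X_S (X_Sᵀ X_S)⁻¹ X_Sᵀ y`. -/
def projVal {d n : ℕ} (X : Matrix (Fin d) (Fin n) ℝ) (y : Fin d → ℝ)
    (S : Finset (Fin n)) : ℝ :=
  y ⬝ᵥ (colsOn X S).mulVec ((gramOn X S)⁻¹.mulVec ((colsOn X S)ᵀ.mulVec y))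

-- generic transport lemmas
lemma colsOn_eq {d n m : ℕ} (X : Matrix (Fin d) (Fin n) ℝ) (S : Finset (Fin n))
    (e : Fin m ≃ {i // i ∈ S}) :
    colsOn X S = (X.submatrix id (fun j => ((e j : {i // i ∈ S}) : Fin n))).submatrix
      (Equiv.refl (Fin d)) e.symm := by
  ext k j
  simp [colsOn, Matrix.submatrix]

lemma gramOn_eq {d n m : ℕ} (X : Matrix (Fin d) (Fin n) ℝ) (S : Finset (Fin n))
    (e : Fin m ≃ {i // i ∈ S}) :
    gramOn X S = (((X.submatrix id (fun j => ((e j : {i // i ∈ S}) : Fin n))))ᵀ *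
      (X.submatrix id (fun j => ((e j : {i // i ∈ S}) : Fin n)))).submatrix e.symm e.symm := by
  rw [gramOn, colsOn_eq X S e]
  rw [Matrix.transpose_submatrix, ← Matrix.submatrix_mul_equiv _ _ _ (Equiv.refl (Fin d)) _]

lemma gramOn_det_eq {d n m : ℕ} (X : Matrix (Fin d) (Fin n) ℝ) (S : Finset (Fin n))
    (e : Fin m ≃ {i // i ∈ S}) :
    (gramOn X S).det = (((X.submatrix id (fun j => ((e j : {i // i ∈ S}) : Fin n))))ᵀ *
      (X.submatrix id (fun j => ((e j : {i // i ∈ S}) : Fin n)))).det := by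
  rw [gramOn_eq X S e, Matrix.det_submatrix_equiv_self]

lemma projVal_eq {d n m : ℕ} (X : Matrix (Fin d) (Fin n) ℝ) (y : Fin d → ℝ)
    (S : Finset (Fin n)) (e : Fin m ≃ {i // i ∈ S}) :
    projVal X y S =
      y ⬝ᵥ (X.submatrix id (fun j => ((e j : {i // i ∈ S}) : Fin n))).mulVec
        ((((X.submatrix id (fun j => ((e j : {i // i ∈ S}) : Fin n)))ᵀ *
           (X.submatrix id (fun j => ((e j : {i // i ∈ S}) : Fin n))))⁻¹).mulVec
          ((X.submatrix id (fun j => ((e j : {i // i ∈ S}) : Fin n)))ᵀ.mulVec y)) := by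
  rw [projVal, gramOn_eq X S e, colsOn_eq X S e]
  simp only [Matrix.transpose_submatrix, Matrix.inv_submatrix_equiv,
    Matrix.submatrix_mulVec_equiv]
  congr 1
  ext i
  simp [Function.comp_def, Matrix.mulVec_mulVec, Matrix.mulVec, dotProduct]


def e0 : Fin 1 ≃ {i : Fin 3 // i ∈ ({0} : Finset (Fin 3))} :=
  ⟨fun _ => ⟨0, by decide⟩, fun _ => 0, fun x => by fin_cases x <;> rfl,
   fun x => by fin_cases x <;> rfl⟩

def e1 : Fin 1 ≃ {i : Fin 3 // i ∈ ({1} : Finset (Fin 3))} :=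
  ⟨fun _ => ⟨1, by decide⟩, fun _ => 0, fun x => by fin_cases x <;> rfl,
   fun x => by fin_cases x <;> rfl⟩

def e2 : Fin 1 ≃ {i : Fin 3 // i ∈ ({2} : Finset (Fin 3))} :=
  ⟨fun _ => ⟨2, by decide⟩, fun _ => 0, fun x => by fin_cases x <;> rfl,
   fun x => by fin_cases x <;> rfl⟩

def e01 : Fin 2 ≃ {i : Fin 3 // i ∈ ({0, 1} : Finset (Fin 3))} :=
  ⟨![⟨0, by decide⟩, ⟨1, by decide⟩], fun x => if (x : Fin 3) = 0 then 0 else 1,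
   fun x => by fin_cases x <;> rfl, fun x => by fin_cases x <;> rfl⟩

def e02 : Fin 2 ≃ {i : Fin 3 // i ∈ ({0, 2} : Finset (Fin 3))} :=
  ⟨![⟨0, by decide⟩, ⟨2, by decide⟩], fun x => if (x : Fin 3) = 0 then 0 else 1,
   fun x => by fin_cases x <;> rfl, fun x => by fin_cases x <;> rfl⟩

theorem stmt10 (z δ : ℝ) (hz0 : 0 < z) (hz1 : z < 1) (hδ0 : 0 < δ) (hδ1 : δ < 1) :
    (IsUnit (gramOn (exX z δ) {0}).det ∧
     IsUnit (gramOn (exX z δ) {1}).det ∧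
     IsUnit (gramOn (exX z δ) {2}).det ∧
     IsUnit (gramOn (exX z δ) {0, 1}).det ∧
     IsUnit (gramOn (exX z δ) {0, 2}).det) ∧
    projVal (exX z δ) ![1, 0, 0] {0} = 0 ∧
    projVal (exX z δ) ![1, 0, 0] {1} = z ^ 2 ∧
    projVal (exX z δ) ![1, 0, 0] {2} = δ ^ 2 * z ^ 2 ∧
    projVal (exX z δ) ![1, 0, 0] {0, 1} = 1 ∧
    projVal (exX z δ) ![1, 0, 0] {0, 2} = δ ^ 2 * z ^ 2 := by
  have hz2 : (0:ℝ) ≤ 1 - z ^ 2 := by nlinarith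
  have hbz2 : (0:ℝ) ≤ 1 - δ ^ 2 * z ^ 2 := by nlinarith
  have ha : Real.sqrt (1 - z ^ 2) * Real.sqrt (1 - z ^ 2) = 1 - z ^ 2 :=
    Real.mul_self_sqrt hz2
  have hb : Real.sqrt (1 - δ ^ 2 * z ^ 2) * Real.sqrt (1 - δ ^ 2 * z ^ 2)
      = 1 - δ ^ 2 * z ^ 2 := Real.mul_self_sqrt hbz2
  have hzne : z ^ 2 ≠ 0 := by positivity
  refine ⟨⟨?_, ?_, ?_, ?_, ?_⟩, ?_, ?_, ?_, ?_, ?_⟩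
  · rw [gramOn_det_eq _ _ e0]
    simp [exX, e0, Matrix.det_fin_one, Matrix.mul_apply, Fin.sum_univ_succ]
  · rw [gramOn_det_eq _ _ e1]
    simp [exX, e1, Matrix.det_fin_one, Matrix.mul_apply, Fin.sum_univ_succ, ha]
    intro h; nlinarith
  · rw [gramOn_det_eq _ _ e2]
    simp [exX, e2, Matrix.det_fin_one, Matrix.mul_apply, Fin.sum_univ_succ, hb]
    intro h; nlinarith
  · rw [gramOn_det_eq _ _ e01]
    simp [exX, e01, Matrix.det_fin_two, Matrix.mul_apply, Fin.sum_univ_succ]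
    exact hz0.ne'
  · rw [gramOn_det_eq _ _ e02]
    simp [exX, e02, Matrix.det_fin_two, Matrix.mul_apply, Fin.sum_univ_succ]
    rw [hb]; intro h; nlinarith
  · rw [projVal_eq _ _ _ e0]
    simp [exX, e0, Matrix.mulVec, dotProduct, Matrix.mul_apply, Fin.sum_univ_succ,
      Matrix.inv_def, Matrix.adjugate_fin_one, Matrix.det_fin_one, Ring.inverse_eq_inv']
  · rw [projVal_eq _ _ _ e1]
    simp [exX, e1, Matrix.mulVec, dotProduct, Matrix.mul_apply, Fin.sum_univ_succ,
      Matrix.inv_def, Matrix.adjugate_fin_one, Matrix.det_fin_one, Ring.inverse_eq_inv', ha]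
    have h1 : z * z + (1 - z ^ 2) = 1 := by ring
    rw [h1]; simp [sq]
  · rw [projVal_eq _ _ _ e2]
    simp [exX, e2, Matrix.mulVec, dotProduct, Matrix.mul_apply, Fin.sum_univ_succ,
      Matrix.inv_def, Matrix.adjugate_fin_one, Matrix.det_fin_one, Ring.inverse_eq_inv', hb]
    have h1 : δ * z * (δ * z) + (1 - δ ^ 2 * z ^ 2) = 1 := by ring
    rw [h1]; simp; try ring
  · rw [projVal_eq _ _ _ e01]
    simp [exX, e01, Matrix.mulVec, dotProduct, Matrix.mul_apply, Fin.sum_univ_succ,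
      Matrix.inv_def, Matrix.adjugate_fin_two, Matrix.det_fin_two, Ring.inverse_eq_inv']
    field_simp
  · rw [projVal_eq _ _ _ e02]
    simp [exX, e02, Matrix.mulVec, dotProduct, Matrix.mul_apply, Fin.sum_univ_succ,
      Matrix.inv_def, Matrix.adjugate_fin_two, Matrix.det_fin_two, Ring.inverse_eq_inv', hb]
    have h1 : δ * z * (δ * z) + (1 - δ ^ 2 * z ^ 2) = 1 := by ring
    rw [h1]; simp; try ring
end
end

section
/- Fix real numbers 0 < z < 1 and 0 < δ < 1 with δz² ≤ √(1−z²). In ℝ³ let x₁ = (0,1,0)ᵀ, x₂ = (z, √(1−z²), 0)ᵀ, and x₃ = (δz, 0, √(1−δ²z²))ᵀ. Then for every two-element set S ⊆ {1,2,3}, the Gram matrix X_Sᵀ X_S of the matrix X_S with columns x_i, i ∈ S, satisfies λ_min(X_Sᵀ X_S) ≥ 1 − √(1−z²) and λ_max(X_Sᵀ X_S) ≤ 1 + √(1−z²). -/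
open scoped BigOperators Matrix

noncomputable section

lemma spec2' (b : ℝ) : spectrum ℝ (!![(1:ℝ), b; b, 1]) = {1 - b, 1 + b} := by
  ext μ
  rw [spectrum.mem_iff, Matrix.isUnit_iff_isUnit_det]
  have h1 : (algebraMap ℝ (Matrix (Fin 2) (Fin 2) ℝ) μ) - !![(1:ℝ), b; b, 1]
      = !![μ - 1, -b; -b, μ - 1] := by
    ext i j
    fin_cases i <;> fin_cases j <;> simp [Matrix.algebraMap_matrix_apply]
  rw [h1, Matrix.det_fin_two_of]
  rw [isUnit_iff_ne_zero, not_not]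
  have hfac : (μ - 1) * (μ - 1) - -b * -b = (μ - (1 - b)) * (μ - (1 + b)) := by ring
  rw [hfac, mul_eq_zero]
  simp [sub_eq_zero]

lemma spectrum_pair' {ι : Type*} [Fintype ι] [DecidableEq ι] (h2 : Fintype.card ι = 2)
    (M : Matrix ι ι ℝ) (b : ℝ) (hM : ∀ p q, M p q = if p = q then 1 else b) :
    spectrum ℝ M = {1 - b, 1 + b} := by
  let e := Fintype.equivFinOfCardEq h2
  have hre : (Matrix.reindexAlgEquiv ℝ ℝ e) M = !![(1:ℝ), b; b, 1] := by
    ext i j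
    have : (Matrix.reindexAlgEquiv ℝ ℝ e) M i j = M (e.symm i) (e.symm j) := rfl
    rw [this, hM]
    simp only [e.symm.injective.eq_iff]
    fin_cases i <;> fin_cases j <;> simp
  rw [← AlgEquiv.spectrum_eq (Matrix.reindexAlgEquiv ℝ ℝ e) M, hre, spec2']

lemma bounds_pair' (b s : ℝ) (hb0 : 0 ≤ b) (hbs : b ≤ s) :
    1 - s ≤ sInf ({1 - b, 1 + b} : Set ℝ) ∧ sSup ({1 - b, 1 + b} : Set ℝ) ≤ 1 + s := by
  rw [csInf_pair, csSup_pair]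
  constructor
  · apply le_min <;> linarith
  · apply max_le <;> linarith

theorem stmt11 (z δ : ℝ) (hz0 : 0 < z) (hz1 : z < 1) (hδ0 : 0 < δ) (hδ1 : δ < 1)
    (hcond : δ * z ^ 2 ≤ Real.sqrt (1 - z ^ 2)) :
    ∀ S : Finset (Fin 3), S.card = 2 →
      1 - Real.sqrt (1 - z ^ 2) ≤ sInf (spectrum ℝ (gramOn (exX z δ) S)) ∧
      sSup (spectrum ℝ (gramOn (exX z δ) S)) ≤ 1 + Real.sqrt (1 - z ^ 2) := by
  have h1 : (0:ℝ) ≤ 1 - z ^ 2 := by nlinarith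
  have h2 : (0:ℝ) ≤ 1 - δ ^ 2 * z ^ 2 := by nlinarith
  have hs0 : 0 ≤ Real.sqrt (1 - z ^ 2) := Real.sqrt_nonneg _
  intro S hS
  have hScases : S = {0, 1} ∨ S = {0, 2} ∨ S = {1, 2} := by
    revert hS; revert S; decide
  have hcard : ∀ T : Finset (Fin 3), T = S → Fintype.card {i // i ∈ S} = 2 := by
    intro T hT; rw [Fintype.card_coe, hS]
  rcases hScases with h | h | h <;> subst h
  · have hspec : spectrum ℝ (gramOn (exX z δ) {0, 1}) =
        {1 - Real.sqrt (1 - z ^ 2), 1 + Real.sqrt (1 - z ^ 2)} := by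
      apply spectrum_pair' (by rw [Fintype.card_coe]; exact hS)
      rintro ⟨p, hp⟩ ⟨q, hq⟩
      fin_cases p <;> fin_cases q <;>
        first
        | exact absurd hp (by decide)
        | exact absurd hq (by decide)
        | (simp [gramOn, colsOn, exX, Matrix.mul_apply, Fin.sum_univ_three,
            Matrix.transpose_apply, Matrix.vecHead, Matrix.vecTail,
            Real.mul_self_sqrt h1, Real.mul_self_sqrt h2] <;> ring_nf)
    rw [hspec]
    exact bounds_pair' _ _ hs0 le_rfl
  · have hspec : spectrum ℝ (gramOn (exX z δ) {0, 2}) =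
        {1 - (0:ℝ), 1 + (0:ℝ)} := by
      apply spectrum_pair' (by rw [Fintype.card_coe]; exact hS)
      rintro ⟨p, hp⟩ ⟨q, hq⟩
      fin_cases p <;> fin_cases q <;>
        first
        | exact absurd hp (by decide)
        | exact absurd hq (by decide)
        | (simp [gramOn, colsOn, exX, Matrix.mul_apply, Fin.sum_univ_three,
            Matrix.transpose_apply, Matrix.vecHead, Matrix.vecTail,
            Real.mul_self_sqrt h1, Real.mul_self_sqrt h2] <;> ring_nf)
    rw [hspec]
    exact bounds_pair' _ _ le_rfl hs0
  · have hspec : spectrum ℝ (gramOn (exX z δ) {1, 2}) =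
        {1 - δ * z ^ 2, 1 + δ * z ^ 2} := by
      apply spectrum_pair' (by rw [Fintype.card_coe]; exact hS)
      rintro ⟨p, hp⟩ ⟨q, hq⟩
      fin_cases p <;> fin_cases q <;>
        first
        | exact absurd hp (by decide)
        | exact absurd hq (by decide)
        | (simp [gramOn, colsOn, exX, Matrix.mul_apply, Fin.sum_univ_three,
            Matrix.transpose_apply, Matrix.vecHead, Matrix.vecTail,
            Real.mul_self_sqrt h1, Real.mul_self_sqrt h2] <;> ring_nf)
    rw [hspec]
    exact bounds_pair' _ _ (by positivity) hcond
end
end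

section
/- Let I be a p-system over [n], and let S, B ∈ I be such that every element b ∈ B \ S satisfies S ∪ {b} ∉ I. Then |B \ S| ≤ p·|S|. -/
noncomputable section

/-- `S` is a maximal (w.r.t. inclusion) member of `I` restricted to `T`. -/
def IsMaximalIn {n : ℕ} (I : Finset (Finset (Fin n))) (T S : Finset (Fin n)) : Prop :=
  S ∈ I ∧ S ⊆ T ∧ ∀ A ∈ I, S ⊆ A → A ⊆ T → A = S

/-- `I` is a `p`-system over `[n]`. -/
def IsPSystem {n : ℕ} (I : Finset (Finset (Fin n))) (p : ℝ) : Prop :=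
  ∅ ∈ I ∧ (∀ S T : Finset (Fin n), S ⊆ T → T ∈ I → S ∈ I) ∧
  ∀ T S U : Finset (Fin n), IsMaximalIn I T S → IsMaximalIn I T U →
    (S.card : ℝ) ≤ p * (U.card : ℝ)

theorem stmt14 {n : ℕ} (p : ℝ) (hp : 1 ≤ p)
    (I : Finset (Finset (Fin n))) (hI : IsPSystem I p)
    (S B : Finset (Fin n)) (hS : S ∈ I) (hB : B ∈ I)
    (hblock : ∀ b ∈ B \ S, insert b S ∉ I) :
    ((B \ S).card : ℝ) ≤ p * (S.card : ℝ) := by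
  obtain ⟨hemp, hdown, hratio⟩ := hI
  set T := S ∪ B with hT
  -- S is maximal in I restricted to T
  have hSmax : IsMaximalIn I T S := by
    refine ⟨hS, Finset.subset_union_left, fun A hA hSA hAT => ?_⟩
    by_contra hne
    obtain ⟨b, hbA, hbS⟩ := Finset.exists_of_ssubset (hSA.ssubset_of_ne (Ne.symm hne))
    have hbB : b ∈ B := (Finset.mem_union.mp (hAT hbA)).resolve_left hbS
    exact hblock b (Finset.mem_sdiff.mpr ⟨hbB, hbS⟩)
      (hdown _ _ (Finset.insert_subset hbA hSA) hA)
  -- find a maximal element containing B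
  set F := I.filter (fun A => B ⊆ A ∧ A ⊆ T)
  have hBF : B ∈ F := Finset.mem_filter.mpr ⟨hB, le_refl B, Finset.subset_union_right⟩
  obtain ⟨U, hUF, hUmax⟩ := F.exists_max_image (fun A => A.card) ⟨B, hBF⟩
  obtain ⟨hUI, hBU, hUT⟩ := Finset.mem_filter.mp hUF
  have hUmax' : IsMaximalIn I T U := by
    refine ⟨hUI, hUT, fun A hA hUA hAT => ?_⟩
    have hAF : A ∈ F := Finset.mem_filter.mpr ⟨hA, hBU.trans hUA, hAT⟩
    exact (Finset.eq_of_subset_of_card_le hUA (hUmax A hAF)).symm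
  calc ((B \ S).card : ℝ) ≤ (U.card : ℝ) := by
        exact_mod_cast Finset.card_le_card ((Finset.sdiff_subset).trans hBU)
    _ ≤ p * S.card := hratio T U S hUmax' hSmax
end
end
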